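/- Let K be a global field, 𝔭 a non-archimedean place of K, and φ : P^1 → P^1 a morphism defined over K with good reduction at 𝔭. Then for any P, Q ∈ P^1(K), one has δ_𝔭(φ(P), φ(Q)) ≥ δ_𝔭(P, Q). -/

import Mathlib

/-!
Common definitions used to formalize the statements of
"Preperiodic points for rational functions defined over a global field
in terms of good reduction" (arXiv:1403.2293).

* A (normalized, non-archimedean) place of a field `K` is modeled as a surjective
  discrete valuation `v : K → ℤ` (with the junk convention `v 0 = 0`).
* `P1 K` is the projective line over `K`; a point `[x : y]` is `P1.mk x y _`.
* An endomorphism of `P1` defined over `K` is a map `φ : P1 K → P1 K` admitting a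
  lift by a pair of binary forms of a common degree `d`, given through their
  coefficient vectors, with nonvanishing resultant (the resultant is defined as
  the determinant of the Sylvester matrix).
* `φ` has good reduction at a place `pl` if it admits a lift whose coefficients
  are `pl`-integral and whose resultant is a `pl`-unit.
* `logDist` is the `𝔭`-adic logarithmic distance `δ_𝔭`; two points of `P1 K` have
  the same reduction modulo `pl` if and only if `0 < logDist pl P Q`.
* The multiplier of a fixed point `[x:y]` of a map lifted by the forms `(a, b)` of
  degree `d` is computed by the trace formula
  `λ = (∂F/∂x (x,y) + ∂G/∂y (x,y) - d⬝c)/c`, where `c` is the scalar with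
  `F(x,y) = c⬝x` and `G(x,y) = c⬝y`.
-/

namespace ArxivPreper

/-- A normalized non-archimedean place of `K`: a surjective discrete valuation
`v : K → ℤ`, with the junk convention `v 0 = 0`. -/
structure Place (K : Type*) [Field K] where
  v : K → ℤ
  v_zero : v 0 = 0
  v_mul : ∀ x y : K, x ≠ 0 → y ≠ 0 → v (x * y) = v x + v y
  v_add : ∀ x y : K, x ≠ 0 → y ≠ 0 → x + y ≠ 0 → min (v x) (v y) ≤ v (x + y)
  v_surj : ∀ n : ℤ, ∃ x : K, x ≠ 0 ∧ v x = n

namespace Place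

variable {K : Type*} [Field K] (pl : Place K)

lemma v_one : pl.v 1 = 0 := by
  have h := pl.v_mul 1 1 one_ne_zero one_ne_zero
  rw [one_mul] at h
  omega

lemma v_neg_one : pl.v (-1 : K) = 0 := by
  have h := pl.v_mul (-1 : K) (-1) (by norm_num) (by norm_num)
  rw [show ((-1 : K) * (-1)) = 1 by ring, pl.v_one] at h
  omega

lemma v_neg (x : K) : pl.v (-x) = pl.v x := by
  by_cases h : x = 0
  · simp [h]
  · have h1 := pl.v_mul (-1) x (by norm_num) h
    rw [show (-1 : K) * x = -x by ring, pl.v_neg_one] at h1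
    omega

lemma v_mul_nonneg {x y : K} (hx : 0 ≤ pl.v x) (hy : 0 ≤ pl.v y) : 0 ≤ pl.v (x * y) := by
  by_cases h1 : x = 0
  · simp [h1, pl.v_zero]
  by_cases h2 : y = 0
  · simp [h2, pl.v_zero]
  rw [pl.v_mul x y h1 h2]
  omega

lemma v_add_nonneg {x y : K} (hx : 0 ≤ pl.v x) (hy : 0 ≤ pl.v y) : 0 ≤ pl.v (x + y) := by
  by_cases h1 : x = 0
  · simpa [h1] using hy
  by_cases h2 : y = 0
  · simpa [h2] using hx
  by_cases h3 : x + y = 0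
  · rw [h3, pl.v_zero]
  exact le_trans (le_min hx hy) (pl.v_add x y h1 h2 h3)

lemma hred_add {a b : K} (ha : a = 0 ∨ 0 < pl.v a) (hb : b = 0 ∨ 0 < pl.v b) :
    a + b = 0 ∨ 0 < pl.v (a + b) := by
  rcases ha with ha | ha
  · subst ha; simpa using hb
  rcases hb with hb | hb
  · subst hb; simpa using Or.inr ha
  by_cases h3 : a + b = 0
  · exact Or.inl h3
  · right
    have hA : a ≠ 0 := by
      intro h; rw [h, pl.v_zero] at ha; exact absurd ha (lt_irrefl 0)
    have hB : b ≠ 0 := by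
      intro h; rw [h, pl.v_zero] at hb; exact absurd hb (lt_irrefl 0)
    exact lt_of_lt_of_le (lt_min ha hb) (pl.v_add a b hA hB h3)

lemma hred_mul {a b : K} (ha : 0 ≤ pl.v a) (hb : b = 0 ∨ 0 < pl.v b) :
    a * b = 0 ∨ 0 < pl.v (a * b) := by
  rcases hb with hb | hb
  · exact Or.inl (by rw [hb, mul_zero])
  by_cases h1 : a = 0
  · exact Or.inl (by rw [h1, zero_mul])
  by_cases h2 : b = 0
  · exact Or.inl (by rw [h2, mul_zero])
  · right
    rw [pl.v_mul a b h1 h2]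
    omega

end Place

/-- `K` is a global field: a number field, or a finite extension of `𝔽_p(t)`. -/
def IsGlobalField (K : Type*) [Field K] : Prop :=
  NumberField K ∨
    ∃ (p : ℕ) (hp : Fact p.Prime),
      letI := hp
      ∃ A : Algebra (RatFunc (ZMod p)) K,
        letI := A
        FiniteDimensional (RatFunc (ZMod p)) K

variable {K : Type*} [Field K]

/-- The projective line over `K`. -/
abbrev P1 (K : Type*) [Field K] := Projectivization K (Fin 2 → K)

/-- The point `[x : y]` of the projective line. -/
def P1.mk (x y : K) (h : ¬(x = 0 ∧ y = 0)) : P1 K :=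
  Projectivization.mk K ![x, y]
    (fun h0 => h ⟨by simpa using congrFun h0 0, by simpa using congrFun h0 1⟩)

/-- The point `[0 : 1]`. -/
def P1zero : P1 K := P1.mk 0 1 (fun h => one_ne_zero h.2)

/-- Value at `(x, y)` of the binary form of degree `d` with coefficient
vector `a` (the coefficient of `x^i y^(d-i)` is `a i`). -/
def formEval (d : ℕ) (a : Fin (d + 1) → K) (x y : K) : K :=
  ∑ i : Fin (d + 1), a i * x ^ (i : ℕ) * y ^ (d - (i : ℕ))

/-- The Sylvester matrix of two binary forms of degree `d`, given by their
coefficient vectors. -/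
def sylvester (d : ℕ) (a b : Fin (d + 1) → K) : Matrix (Fin (d + d)) (Fin (d + d)) K :=
  Matrix.of fun i j =>
    if hi : (i : ℕ) < d then
      if h : (i : ℕ) ≤ (j : ℕ) ∧ (j : ℕ) ≤ (i : ℕ) + d then a ⟨(j : ℕ) - (i : ℕ), by omega⟩
      else 0
    else
      if h : (i : ℕ) - d ≤ (j : ℕ) ∧ (j : ℕ) ≤ (i : ℕ) then
        b ⟨(j : ℕ) - ((i : ℕ) - d), by omega⟩
      else 0

/-- The resultant of two binary forms of degree `d`: the determinant of their
Sylvester matrix. -/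
def resultant (d : ℕ) (a b : Fin (d + 1) → K) : K := (sylvester d a b).det

/-- `(a, b)` is a pair of coefficient vectors of binary forms `F`, `G` of common degree `d`,
with nonzero resultant, such that `φ([x:y]) = [F(x,y) : G(x,y)]` on `P1 K`.  This witnesses
that `φ` is an endomorphism of the projective line defined over `K` (of degree `d`). -/
def IsLift (φ : P1 K → P1 K) (d : ℕ) (a b : Fin (d + 1) → K) : Prop :=
  resultant d a b ≠ 0 ∧
    ∀ (x y : K) (h : ¬(x = 0 ∧ y = 0)),
      ∃ h' : ¬(formEval d a x y = 0 ∧ formEval d b x y = 0),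
        φ (P1.mk x y h) = P1.mk (formEval d a x y) (formEval d b x y) h'

/-- `φ` is an endomorphism of `P1` defined over `K`. -/
def IsEndo (φ : P1 K → P1 K) : Prop := ∃ d a b, IsLift φ d a b

/-- `φ` has good reduction at the place `pl`: it can be written as `[F : G]` with `F`, `G`
binary forms of a common degree whose coefficients are `pl`-integral and whose resultant
is a `pl`-unit. -/
def GoodReduction (pl : Place K) (φ : P1 K → P1 K) : Prop :=
  ∃ (d : ℕ) (a b : Fin (d + 1) → K),
    IsLift φ d a b ∧ (∀ i, 0 ≤ pl.v (a i)) ∧ (∀ i, 0 ≤ pl.v (b i)) ∧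
      pl.v (resultant d a b) = 0

open Classical in
/-- The valuation of a place extended by `v 0 = ⊤`. -/
noncomputable def extv (pl : Place K) (x : K) : WithTop ℤ :=
  if x = 0 then ⊤ else (pl.v x : WithTop ℤ)

open Classical in
/-- `min (v x) (v y)` for a nonzero vector `(x, y)`, ignoring vanishing coordinates. -/
noncomputable def vminVec (pl : Place K) (w : Fin 2 → K) : ℤ :=
  if w 0 = 0 then pl.v (w 1)
  else if w 1 = 0 then pl.v (w 0)
  else min (pl.v (w 0)) (pl.v (w 1))

/-- The `𝔭`-adic logarithmic distance
`δ_𝔭(P,Q) = v(x₁y₂ - x₂y₁) - min (v x₁) (v y₁) - min (v x₂) (v y₂)`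
(computed on fixed representatives; it is independent of the choice of homogeneous
coordinates).  Note `δ_𝔭(P,Q) = ⊤` iff `P = Q`, and two points have the same reduction
modulo `pl` iff `0 < δ_𝔭(P,Q)`. -/
noncomputable def logDist (pl : Place K) (P Q : P1 K) : WithTop ℤ :=
  extv pl (P.rep 0 * Q.rep 1 - Q.rep 0 * P.rep 1) +
    ((-(vminVec pl P.rep) - vminVec pl Q.rep : ℤ) : WithTop ℤ)

/-- The forward orbit `{φ^n(P) : n ∈ ℕ}` of `P` under `φ`. -/
def orbit (φ : P1 K → P1 K) (P : P1 K) : Set (P1 K) := Set.range fun n : ℕ => φ^[n] P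

/-- `P` is preperiodic for `φ`: its forward orbit is finite. -/
def Preperiodic (φ : P1 K → P1 K) (P : P1 K) : Prop := (orbit φ P).Finite

/-- `P` is periodic for `φ`. -/
def PeriodicPt (φ : P1 K → P1 K) (P : P1 K) : Prop := ∃ n : ℕ, 0 < n ∧ φ^[n] P = P

/-- `x` is an `S`-unit of `K`. -/
def IsSUnit (S : Finset (Place K)) (x : K) : Prop :=
  x ≠ 0 ∧ ∀ pl : Place K, pl ∉ S → pl.v x = 0

/-- The ring of `S`-integers of `K`. -/
def SIntegers (S : Finset (Place K)) : Subring K where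
  carrier := {x : K | ∀ pl : Place K, pl ∉ S → 0 ≤ pl.v x}
  zero_mem' := fun pl _ => le_of_eq pl.v_zero.symm
  one_mem' := fun pl _ => le_of_eq pl.v_one.symm
  add_mem' := fun hx hy pl hpl => pl.v_add_nonneg (hx pl hpl) (hy pl hpl)
  mul_mem' := fun hx hy pl hpl => pl.v_mul_nonneg (hx pl hpl) (hy pl hpl)
  neg_mem' := fun {x} hx pl hpl => show 0 ≤ pl.v (-x) by rw [pl.v_neg]; exact hx pl hpl

/-- The local ring `R_𝔭 = {x : v_𝔭(x) ≥ 0}` at the place `pl`. -/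
def integersAt (pl : Place K) : Subring K where
  carrier := {x : K | 0 ≤ pl.v x}
  zero_mem' := le_of_eq pl.v_zero.symm
  one_mem' := le_of_eq pl.v_one.symm
  add_mem' := fun hx hy => pl.v_add_nonneg hx hy
  mul_mem' := fun hx hy => pl.v_mul_nonneg hx hy
  neg_mem' := fun {x} hx => show 0 ≤ pl.v (-x) by rw [pl.v_neg]; exact hx

/-- The maximal ideal `{x : v_𝔭(x) > 0}` of the local ring at `pl`. -/
def maxIdealAt (pl : Place K) : Ideal ↥(integersAt pl) where
  carrier := {x : ↥(integersAt pl) | (x : K) = 0 ∨ 0 < pl.v (x : K)}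
  zero_mem' := Or.inl rfl
  add_mem' := fun {a b} ha hb => by
    have h := pl.hred_add (a := (a : K)) (b := (b : K)) ha hb
    show ((a + b : ↥(integersAt pl)) : K) = 0 ∨ 0 < pl.v ((a + b : ↥(integersAt pl)) : K)
    push_cast
    exact h
  smul_mem' := fun c {x} hx => by
    have h := pl.hred_mul (a := (c : K)) (b := (x : K)) c.2 hx
    show ((c • x : ↥(integersAt pl)) : K) = 0 ∨ 0 < pl.v ((c • x : ↥(integersAt pl)) : K)
    rw [smul_eq_mul]
    push_cast
    exact h

/-- The residue field `k(𝔭)` at the place `pl`. -/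
def Residue (pl : Place K) : Type _ := ↥(integersAt pl) ⧸ maxIdealAt pl

/-- Value at `(x,y)` of `∂F/∂x` for the binary form `F` of degree `d` with coefficient
vector `a`. -/
def formEvalDx (d : ℕ) (a : Fin (d + 1) → K) (x y : K) : K :=
  ∑ i : Fin (d + 1), ((i : ℕ) : K) * a i * x ^ ((i : ℕ) - 1) * y ^ (d - (i : ℕ))

/-- Value at `(x,y)` of `∂G/∂y` for the binary form `G` of degree `d` with coefficient
vector `b`. -/
def formEvalDy (d : ℕ) (b : Fin (d + 1) → K) (x y : K) : K :=
  ∑ i : Fin (d + 1), ((d - (i : ℕ) : ℕ) : K) * b i * x ^ (i : ℕ) * y ^ (d - (i : ℕ) - 1)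

/-- The multiplier `λ_P` at a fixed point `P = [x:y]` of the map lifted by the pair of
degree-`d` binary forms `(a, b)`, where `c` is the scalar with `F(x,y) = c⬝x` and
`G(x,y) = c⬝y`: by the trace formula, `λ = (F_x(x,y) + G_y(x,y) - d⬝c)/c`. -/
noncomputable def multiplier (d : ℕ) (a b : Fin (d + 1) → K) (x y c : K) : K :=
  (formEvalDx d a x y + formEvalDy d b x y - (d : K) * c) / c

/-!
Scale `P` and `Q` to normalized coordinates: integral, and not both in the maximal ideal. On
such coordinates `δ_𝔭(P, Q) = v(x₁y₂ - x₂y₁)`. Good reduction preserves normalized coordinates,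
because `Res(F, G)·x^(2d-1)` and `Res(F, G)·y^(2d-1)` are integral combinations of `F(x, y)` and
`G(x, y)`. Finally `F(P)G(Q) - F(Q)G(P)` is divisible by `x₁y₂ - x₂y₁` in `R_𝔭`, since each
difference of products of monomials is a multiple of `(x₁y₂)^m - (x₂y₁)^m`.
-/

open Matrix

namespace Place

variable (pl : Place K)

lemma v_pow {x : K} (hx : x ≠ 0) (n : ℕ) : pl.v (x ^ n) = n * pl.v x := by
  induction n with
  | zero => simpa using pl.v_one
  | succ n ih =>
    rw [pow_succ, pl.v_mul _ _ (pow_ne_zero n hx) hx, ih]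
    push_cast
    ring

/-- `x` lies in the maximal ideal of the valuation ring; `x = 0` is listed separately because
of the junk value `v 0 = 0`. -/
def ReducesToZero (x : K) : Prop := x = 0 ∨ 0 < pl.v x

variable {pl}

lemma reducesToZero_of_mul_pow {r z : K} {n : ℕ} (hr : r ≠ 0) (hvr : pl.v r = 0)
    (h : pl.ReducesToZero (r * z ^ n)) : pl.ReducesToZero z := by
  by_cases hz : z = 0
  · exact Or.inl hz
  rcases h with h | h
  · exact absurd h (mul_ne_zero hr (pow_ne_zero n hz))
  rw [pl.v_mul _ _ hr (pow_ne_zero n hz), hvr, pl.v_pow hz, zero_add] at h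
  exact Or.inr (pos_of_mul_pos_right h (Nat.cast_nonneg n))

end Place

def IsNormalizedPair (pl : Place K) (x y : K) : Prop :=
  0 ≤ pl.v x ∧ 0 ≤ pl.v y ∧ ¬(pl.ReducesToZero x ∧ pl.ReducesToZero y)

open Classical in
lemma vminVec_pair (pl : Place K) (x y : K) :
    vminVec pl ![x, y] =
      if x = 0 then pl.v y else if y = 0 then pl.v x else min (pl.v x) (pl.v y) := by
  simp [vminVec]

lemma IsNormalizedPair.vminVec_eq_zero {pl : Place K} {x y : K} (h : IsNormalizedPair pl x y) :
    vminVec pl ![x, y] = 0 := by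
  obtain ⟨hx, hy, hred⟩ := h
  simp only [Place.ReducesToZero, not_and_or, not_or, not_lt] at hred
  rw [vminVec_pair]
  rcases hred with ⟨hx0, hx'⟩ | ⟨hy0, hy'⟩ <;> split_ifs <;> omega

lemma IsNormalizedPair.swap {pl : Place K} {x y : K} (h : IsNormalizedPair pl x y) :
    IsNormalizedPair pl y x :=
  ⟨h.2.1, h.1, fun hr => h.2.2 hr.symm⟩

lemma exists_isNormalizedPair_mul_of_le (pl : Place K) {x y : K} (hx : x ≠ 0)
    (hxy : y = 0 ∨ pl.v x ≤ pl.v y) : ∃ l ≠ 0, IsNormalizedPair pl (l * x) (l * y) := by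
  obtain ⟨l, hl, hvl⟩ := pl.v_surj (-pl.v x)
  have hlx : pl.v (l * x) = 0 := by rw [pl.v_mul _ _ hl hx]; omega
  have hly : 0 ≤ pl.v (l * y) := by
    rcases eq_or_ne y 0 with rfl | hy
    · simp [pl.v_zero]
    · have := hxy.resolve_left hy
      rw [pl.v_mul _ _ hl hy]; omega
  refine ⟨l, hl, hlx.ge, hly, fun ⟨hr, _⟩ => ?_⟩
  rcases hr with h | h
  · exact mul_ne_zero hl hx h
  · omega

lemma exists_isNormalizedPair_mul (pl : Place K) {x y : K} (h : ¬(x = 0 ∧ y = 0)) :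
    ∃ l ≠ 0, IsNormalizedPair pl (l * x) (l * y) := by
  by_cases hx : x = 0
  · have hy : y ≠ 0 := fun hy => h ⟨hx, hy⟩
    obtain ⟨l, hl, hn⟩ := exists_isNormalizedPair_mul_of_le pl hy (Or.inl hx)
    exact ⟨l, hl, hn.swap⟩
  by_cases hy : y = 0
  · exact exists_isNormalizedPair_mul_of_le pl hx (Or.inl hy)
  rcases le_total (pl.v x) (pl.v y) with hxy | hyx
  · exact exists_isNormalizedPair_mul_of_le pl hx (Or.inr hxy)
  · obtain ⟨l, hl, hn⟩ := exists_isNormalizedPair_mul_of_le pl hy (Or.inr hyx)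
    exact ⟨l, hl, hn.swap⟩

lemma extv_of_ne_zero (pl : Place K) {x : K} (hx : x ≠ 0) : extv pl x = pl.v x := if_neg hx

lemma extv_mul (pl : Place K) (x y : K) : extv pl (x * y) = extv pl x + extv pl y := by
  by_cases hx : x = 0
  · simp [extv, hx]
  by_cases hy : y = 0
  · simp [extv, hy]
  · simp [extv, hx, hy, pl.v_mul x y hx hy]

lemma extv_le_extv_mul (pl : Place K) (x : K) {t : K} (ht : 0 ≤ pl.v t) :
    extv pl x ≤ extv pl (x * t) := by
  rw [extv_mul]
  refine le_add_of_nonneg_right ?_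
  by_cases h : t = 0
  · simp [extv, h]
  · rw [extv_of_ne_zero pl h]
    exact_mod_cast ht

lemma vminVec_pair_mul (pl : Place K) {l x y : K} (hl : l ≠ 0) (h : ¬(x = 0 ∧ y = 0)) :
    vminVec pl ![l * x, l * y] = pl.v l + vminVec pl ![x, y] := by
  rw [vminVec_pair, vminVec_pair]
  by_cases hx : x = 0
  · have hy : y ≠ 0 := fun hy => h ⟨hx, hy⟩
    simp [hx, pl.v_mul l y hl hy]
  by_cases hy : y = 0
  · simp [hy, hl, hx, pl.v_mul l x hl hx]
  · simp only [mul_eq_zero, hl, hx, hy, or_self, if_false, pl.v_mul l x hl hx,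
      pl.v_mul l y hl hy]
    omega

noncomputable def logDistCoord (pl : Place K) (x₁ y₁ x₂ y₂ : K) : WithTop ℤ :=
  extv pl (x₁ * y₂ - x₂ * y₁) +
    ((-(vminVec pl ![x₁, y₁]) - vminVec pl ![x₂, y₂] : ℤ) : WithTop ℤ)

lemma logDistCoord_mul (pl : Place K) {l₁ l₂ x₁ y₁ x₂ y₂ : K} (hl₁ : l₁ ≠ 0) (hl₂ : l₂ ≠ 0)
    (h₁ : ¬(x₁ = 0 ∧ y₁ = 0)) (h₂ : ¬(x₂ = 0 ∧ y₂ = 0)) :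
    logDistCoord pl (l₁ * x₁) (l₁ * y₁) (l₂ * x₂) (l₂ * y₂) = logDistCoord pl x₁ y₁ x₂ y₂ := by
  rw [logDistCoord, logDistCoord, vminVec_pair_mul pl hl₁ h₁, vminVec_pair_mul pl hl₂ h₂,
    show l₁ * x₁ * (l₂ * y₂) - l₂ * x₂ * (l₁ * y₁) = l₁ * l₂ * (x₁ * y₂ - x₂ * y₁) by ring,
    extv_mul, extv_of_ne_zero pl (mul_ne_zero hl₁ hl₂), pl.v_mul _ _ hl₁ hl₂,
    add_comm _ (extv pl _), add_assoc, ← WithTop.coe_add]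
  congr 2
  ring

lemma logDist_mk (pl : Place K) {x₁ y₁ x₂ y₂ : K} (h₁ : ¬(x₁ = 0 ∧ y₁ = 0))
    (h₂ : ¬(x₂ = 0 ∧ y₂ = 0)) :
    logDist pl (P1.mk x₁ y₁ h₁) (P1.mk x₂ y₂ h₂) = logDistCoord pl x₁ y₁ x₂ y₂ := by
  obtain ⟨c₁, hc₁⟩ := Projectivization.exists_smul_eq_mk_rep K ![x₁, y₁] (by simpa using h₁)
  obtain ⟨c₂, hc₂⟩ := Projectivization.exists_smul_eq_mk_rep K ![x₂, y₂] (by simpa using h₂)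
  rw [logDist, P1.mk, P1.mk, ← hc₁, ← hc₂, ← logDistCoord_mul pl c₁.ne_zero c₂.ne_zero h₁ h₂]
  simp [logDistCoord, Units.smul_def]

lemma exists_mk_eq_isNormalizedPair (pl : Place K) (P : P1 K) :
    ∃ x y h, P1.mk x y h = P ∧ IsNormalizedPair pl x y := by
  have hP : ¬(P.rep 0 = 0 ∧ P.rep 1 = 0) := fun h =>
    P.rep_nonzero (funext fun i => by fin_cases i <;> simp [h.1, h.2])
  obtain ⟨l, hl, hn⟩ := exists_isNormalizedPair_mul pl hP
  refine ⟨_, _, fun h => hP ⟨?_, ?_⟩, ?_, hn⟩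
  · simpa [hl] using h.1
  · simpa [hl] using h.2
  conv_rhs => rw [← P.mk_rep]
  exact (Projectivization.mk_eq_mk_iff K _ _ _ _).2
    ⟨Units.mk0 l hl, funext fun i => by fin_cases i <;> simp [Units.smul_def]⟩

lemma sub_dvd_monomial_cross {R : Type*} [CommRing R] (x₁ y₁ x₂ y₂ : R) {d i j : ℕ}
    (hi : i ≤ d) (hj : j ≤ d) :
    x₁ * y₂ - x₂ * y₁ ∣ x₁ ^ i * y₁ ^ (d - i) * (x₂ ^ j * y₂ ^ (d - j)) -
      x₁ ^ j * y₁ ^ (d - j) * (x₂ ^ i * y₂ ^ (d - i)) := by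
  wlog hij : i ≤ j generalizing i j
  · rw [← dvd_neg, neg_sub]
    exact this hj hi (le_of_not_ge hij)
  obtain ⟨m, rfl⟩ := Nat.exists_eq_add_of_le hij
  have hdi : d - i = d - (i + m) + m := by omega
  rw [hdi]
  convert ((sub_dvd_pow_sub_pow (x₁ * y₂) (x₂ * y₁) m).mul_left
    (-((x₁ * x₂) ^ i * (y₁ * y₂) ^ (d - (i + m))))) using 1
  ring

lemma formEval_mem_integersAt (pl : Place K) {d : ℕ} {a : Fin (d + 1) → K}
    (ha : ∀ i, 0 ≤ pl.v (a i)) {x y : K} (hx : x ∈ integersAt pl) (hy : y ∈ integersAt pl) :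
    formEval d a x y ∈ integersAt pl :=
  sum_mem fun i _ => mul_mem (mul_mem (ha i) (pow_mem hx _)) (pow_mem hy _)

lemma exists_formEval_cross_eq_mul (pl : Place K) {d : ℕ} {a b : Fin (d + 1) → K}
    (ha : ∀ i, 0 ≤ pl.v (a i)) (hb : ∀ i, 0 ≤ pl.v (b i)) {x₁ y₁ x₂ y₂ : K}
    (hx₁ : x₁ ∈ integersAt pl) (hy₁ : y₁ ∈ integersAt pl) (hx₂ : x₂ ∈ integersAt pl)
    (hy₂ : y₂ ∈ integersAt pl) :
    ∃ t ∈ integersAt pl, formEval d a x₁ y₁ * formEval d b x₂ y₂ -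
      formEval d a x₂ y₂ * formEval d b x₁ y₁ = (x₁ * y₂ - x₂ * y₁) * t := by
  have hdvd (i j : Fin (d + 1)) := sub_dvd_monomial_cross (⟨x₁, hx₁⟩ : integersAt pl)
    ⟨y₁, hy₁⟩ ⟨x₂, hx₂⟩ ⟨y₂, hy₂⟩ (Nat.le_of_lt_succ i.isLt) (Nat.le_of_lt_succ j.isLt)
  choose t ht using hdvd
  refine ⟨∑ i, ∑ j, a i * b j * t i j,
    sum_mem fun i _ => sum_mem fun j _ => mul_mem (mul_mem (ha i) (hb j)) (t i j).2, ?_⟩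
  rw [formEval, formEval, formEval, formEval, Finset.sum_mul_sum, Finset.sum_mul_sum,
    Finset.mul_sum, ← Finset.sum_sub_distrib]
  refine Finset.sum_congr rfl fun i _ => ?_
  rw [← Finset.sum_sub_distrib, Finset.mul_sum]
  refine Finset.sum_congr rfl fun j _ => ?_
  have := congrArg Subtype.val (ht i j)
  push_cast at this
  linear_combination a i * b j * this

lemma sum_shifted_coeff_mul_monomial (d s t n : ℕ) (c : Fin (d + 1) → K) (x y : K)
    (ht : t = s + d) (hn : t < n) :
    ∑ j : Fin n, (if h : s ≤ (j : ℕ) ∧ (j : ℕ) ≤ t then c ⟨(j : ℕ) - s, by omega⟩ else 0) *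
        (x ^ (j : ℕ) * y ^ (n - 1 - (j : ℕ))) =
      x ^ s * y ^ (n - 1 - t) * formEval d c x y := by
  subst ht
  rw [formEval, Finset.mul_sum]
  symm
  refine Finset.sum_of_injOn (fun k : Fin (d + 1) => (⟨s + k, by omega⟩ : Fin n))
    (fun k _ l _ hkl => Fin.ext (by simpa using hkl)) (fun _ _ => Finset.mem_univ _) ?_ ?_
  · intro j _ hj
    rw [dif_neg, zero_mul]
    rintro ⟨hsj, hjt⟩
    exact hj ⟨⟨(j : ℕ) - s, by omega⟩, Finset.mem_coe.2 (Finset.mem_univ _),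
      Fin.ext (by simp; omega)⟩
  · intro k _
    have hk := Nat.le_of_lt_succ k.isLt
    simp only [le_add_iff_nonneg_right, zero_le, add_le_add_iff_left, hk, and_self,
      dif_pos, add_tsub_cancel_left, Fin.eta]
    rw [show n - 1 - (s + k) = n - 1 - (s + d) + (d - k) by omega, pow_add, pow_add]
    ring

lemma sylvester_mulVec_monomials (d : ℕ) (a b : Fin (d + 1) → K) (x y : K) (i : Fin (d + d)) :
    (sylvester d a b *ᵥ fun j : Fin (d + d) => x ^ (j : ℕ) * y ^ (d + d - 1 - (j : ℕ))) i =
      if (i : ℕ) < d then x ^ (i : ℕ) * y ^ (d - 1 - (i : ℕ)) * formEval d a x y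
      else x ^ ((i : ℕ) - d) * y ^ (d + d - 1 - (i : ℕ)) * formEval d b x y := by
  simp only [Matrix.mulVec, dotProduct, sylvester, Matrix.of_apply]
  split_ifs with hi
  · rw [sum_shifted_coeff_mul_monomial d i (i + d) (d + d) a x y rfl (by omega),
      show d + d - 1 - (i + d) = d - 1 - i by omega]
  · exact sum_shifted_coeff_mul_monomial d (i - d) i (d + d) b x y (by omega) i.isLt

lemma adjugate_apply_mem_subring {n : Type*} [Fintype n] [DecidableEq n] (S : Subring K)
    (M : Matrix n n K) (hM : ∀ i j, M i j ∈ S) (i j : n) : M.adjugate i j ∈ S := by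
  let M' : Matrix n n S := fun i j => ⟨M i j, hM i j⟩
  have hM' : S.subtype.mapMatrix M' = M := rfl
  rw [← hM', ← RingHom.map_adjugate]
  exact (M'.adjugate i j).2

lemma sylvester_apply_mem_integersAt (pl : Place K) {d : ℕ} {a b : Fin (d + 1) → K}
    (ha : ∀ i, 0 ≤ pl.v (a i)) (hb : ∀ i, 0 ≤ pl.v (b i)) (i j : Fin (d + d)) :
    sylvester d a b i j ∈ integersAt pl := by
  simp only [sylvester, Matrix.of_apply]
  split_ifs
  exacts [ha _, zero_mem _, hb _, zero_mem _]

/-- By Cramer's rule for the Sylvester matrix, `Res(F, G) x^j y^(2d-1-j)` is an integral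
combination of `F(x, y)` and `G(x, y)`. -/
lemma reducesToZero_resultant_mul_monomial (pl : Place K) {d : ℕ} {a b : Fin (d + 1) → K}
    (ha : ∀ i, 0 ≤ pl.v (a i)) (hb : ∀ i, 0 ≤ pl.v (b i)) {x y : K}
    (hx : x ∈ integersAt pl) (hy : y ∈ integersAt pl)
    (hF : pl.ReducesToZero (formEval d a x y)) (hG : pl.ReducesToZero (formEval d b x y))
    (j : Fin (d + d)) :
    pl.ReducesToZero (resultant d a b * (x ^ (j : ℕ) * y ^ (d + d - 1 - (j : ℕ)))) := by
  set m : Fin (d + d) → K := fun j => x ^ (j : ℕ) * y ^ (d + d - 1 - (j : ℕ))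
  have hcramer : resultant d a b • m = (sylvester d a b).adjugate *ᵥ (sylvester d a b *ᵥ m) := by
    rw [mulVec_mulVec, adjugate_mul, smul_mulVec, one_mulVec, resultant]
  have hj := congrFun hcramer j
  simp only [Pi.smul_apply, smul_eq_mul, mulVec, dotProduct] at hj
  rw [hj]
  refine Finset.sum_induction _ pl.ReducesToZero (fun _ _ => pl.hred_add) (Or.inl rfl)
    fun i _ => pl.hred_mul (adjugate_apply_mem_subring _ _
      (sylvester_apply_mem_integersAt pl ha hb) j i) ?_
  have hmono {p q : ℕ} {z : K} (hz : pl.ReducesToZero z) : pl.ReducesToZero (x ^ p * y ^ q * z) :=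
    pl.hred_mul (mul_mem (pow_mem hx p) (pow_mem hy q)) hz
  rw [show ∑ k, sylvester d a b i k * m k = (sylvester d a b *ᵥ m) i from rfl,
    sylvester_mulVec_monomials]
  split_ifs
  exacts [hmono hF, hmono hG]

lemma IsNormalizedPair.formEval {pl : Place K} {d : ℕ} (hd : 0 < d) {a b : Fin (d + 1) → K}
    (ha : ∀ i, 0 ≤ pl.v (a i)) (hb : ∀ i, 0 ≤ pl.v (b i))
    (hres : resultant d a b ≠ 0) (hvres : pl.v (resultant d a b) = 0) {x y : K}
    (h : IsNormalizedPair pl x y) :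
    IsNormalizedPair pl (formEval d a x y) (formEval d b x y) := by
  obtain ⟨hx, hy, hred⟩ := h
  refine ⟨formEval_mem_integersAt pl ha hx hy, formEval_mem_integersAt pl hb hx hy,
    fun ⟨hF, hG⟩ => hred ⟨?_, ?_⟩⟩
  · have := reducesToZero_resultant_mul_monomial pl ha hb hx hy hF hG ⟨d + d - 1, by omega⟩
    rw [Nat.sub_self, pow_zero, mul_one] at this
    exact Place.reducesToZero_of_mul_pow hres hvres this
  · have := reducesToZero_resultant_mul_monomial pl ha hb hx hy hF hG ⟨0, by omega⟩
    rw [pow_zero, one_mul, Nat.sub_zero] at this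
    exact Place.reducesToZero_of_mul_pow hres hvres this

lemma logDistCoord_eq_extv {pl : Place K} {x₁ y₁ x₂ y₂ : K} (h₁ : IsNormalizedPair pl x₁ y₁)
    (h₂ : IsNormalizedPair pl x₂ y₂) :
    logDistCoord pl x₁ y₁ x₂ y₂ = extv pl (x₁ * y₂ - x₂ * y₁) := by
  simp [logDistCoord, h₁.vminVec_eq_zero, h₂.vminVec_eq_zero]

lemma logDistCoord_le_formEval (pl : Place K) {d : ℕ} {a b : Fin (d + 1) → K}
    (ha : ∀ i, 0 ≤ pl.v (a i)) (hb : ∀ i, 0 ≤ pl.v (b i))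
    (hres : resultant d a b ≠ 0) (hvres : pl.v (resultant d a b) = 0) {x₁ y₁ x₂ y₂ : K}
    (h₁ : IsNormalizedPair pl x₁ y₁) (h₂ : IsNormalizedPair pl x₂ y₂) :
    logDistCoord pl x₁ y₁ x₂ y₂ ≤
      logDistCoord pl (formEval d a x₁ y₁) (formEval d b x₁ y₁)
        (formEval d a x₂ y₂) (formEval d b x₂ y₂) := by
  rcases Nat.eq_zero_or_pos d with rfl | hd
  · -- a constant map: the cross term of the images vanishes
    simp [logDistCoord, formEval, extv]
  obtain ⟨t, ht, hcross⟩ := exists_formEval_cross_eq_mul pl ha hb h₁.1 h₁.2.1 h₂.1 h₂.2.1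
  rw [logDistCoord_eq_extv h₁ h₂, logDistCoord_eq_extv (h₁.formEval hd ha hb hres hvres)
    (h₂.formEval hd ha hb hres hvres), hcross]
  exact extv_le_extv_mul pl _ ht

theorem stmt17_general (K : Type) [Field K] (pl : Place K)
    (φ : P1 K → P1 K) (hgood : GoodReduction pl φ)
    (P Q : P1 K) : logDist pl P Q ≤ logDist pl (φ P) (φ Q) := by
  obtain ⟨d, a, b, ⟨hres, hlift⟩, ha, hb, hvres⟩ := hgood
  obtain ⟨x₁, y₁, h₁, rfl, hn₁⟩ := exists_mk_eq_isNormalizedPair pl P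
  obtain ⟨x₂, y₂, h₂, rfl, hn₂⟩ := exists_mk_eq_isNormalizedPair pl Q
  obtain ⟨_, hφ₁⟩ := hlift x₁ y₁ h₁
  obtain ⟨_, hφ₂⟩ := hlift x₂ y₂ h₂
  rw [hφ₁, hφ₂, logDist_mk, logDist_mk]
  exact logDistCoord_le_formEval pl ha hb hres hvres hn₁ hn₂

/-- Proposition 5.2 of Morton–Silverman.  Let `K` be a global field,
`𝔭` a non-archimedean place of `K` and `φ : ℙ¹ → ℙ¹` a morphism defined over `K` with
good reduction at `𝔭`.  Then `δ_𝔭(φ(P), φ(Q)) ≥ δ_𝔭(P, Q)` for all `P, Q ∈ ℙ¹(K)`. -/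
theorem stmt17 (K : Type) [Field K] (hK : IsGlobalField K) (pl : Place K)
    (φ : P1 K → P1 K) (hφ : IsEndo φ) (hgood : GoodReduction pl φ)
    (P Q : P1 K) : logDist pl P Q ≤ logDist pl (φ P) (φ Q) :=
  stmt17_general K pl φ hgood P Q

end ArxivPreper
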